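/- Fix 1 ≤ i ≤ n-1 and let M = M_{Q^{(i)}} over ℤ[z_1,…,z_{2n-1}] for the word Q^{(i)} = (i, i-1, …, 1, 2, 3, …, n-1, 0, n, n-1, …, i+1). Then for every 1 ≤ α ≤ i, the determinant of the northwest α×α submatrix of M (rows and columns {1,…,α}) equals -(z_i + Σ_{k=1}^{α-1} z_{i-k} z_{i+k}). (Computational core of Proposition 4 for 1 ≤ α ≤ i.) -/

import Mathlib

open Matrix MvPolynomial

/-- For `1 ≤ α ≤ n`, the `(2n+2) × (2n+2)` identity matrix modified by replacing the
`2 × 2` diagonal block in rows/columns `{α, α+1}` (1-based) by `[[-z,1],[1,0]]` and the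
`2 × 2` diagonal block in rows/columns `{2n+2-α, 2n+3-α}` by `[[z,1],[1,0]]`; for
`α = 0`, the identity matrix with the central `4 × 4` diagonal block in rows/columns
`{n, n+1, n+2, n+3}` replaced by `[[-z,0,1,0],[0,z,0,1],[1,0,0,0],[0,1,0,0]]`. -/
def gMat {R : Type*} [CommRing R] (n : ℕ) (α : ℕ) (z : R) :
    Matrix (Fin (2 * n + 2)) (Fin (2 * n + 2)) R :=
  Matrix.of fun i j =>
    let i' := (i : ℕ) + 1
    let j' := (j : ℕ) + 1
    if α = 0 then
      if i' = n ∧ j' = n then -z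
      else if i' = n + 1 ∧ j' = n + 1 then z
      else if (i' = n ∧ j' = n + 2) ∨ (i' = n + 1 ∧ j' = n + 3) ∨
              (i' = n + 2 ∧ j' = n) ∨ (i' = n + 3 ∧ j' = n + 1) then 1
      else if i' = j' ∧ ¬(i' = n ∨ i' = n + 1 ∨ i' = n + 2 ∨ i' = n + 3) then 1
      else 0
    else
      if i' = α ∧ j' = α then -z
      else if i' = 2 * n + 2 - α ∧ j' = 2 * n + 2 - α then z
      else if (i' = α ∧ j' = α + 1) ∨ (i' = α + 1 ∧ j' = α) ∨
              (i' = 2 * n + 2 - α ∧ j' = 2 * n + 3 - α) ∨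
              (i' = 2 * n + 3 - α ∧ j' = 2 * n + 2 - α) then 1
      else if i' = j' ∧
          ¬(i' = α ∨ i' = α + 1 ∨ i' = 2 * n + 2 - α ∨ i' = 2 * n + 3 - α) then 1
      else 0

/-- The descending word `(a, a-1, …, b)`. -/
def descWord (a b : ℕ) : List ℕ := (List.range (a + 1 - b)).reverse.map (· + b)

/-- The ascending word `(a, a+1, …, b)`. -/
def ascWord (a b : ℕ) : List ℕ := (List.range (b + 1 - a)).map (· + a)

/-- `Q_1 = (0, n-1, n-2, …, 2, 1, 2, 3, …, n-1, 0)`. -/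
def wordQ1 (n : ℕ) : List ℕ := 0 :: (descWord (n - 1) 1 ++ ascWord 2 (n - 1) ++ [0])

/-- `Q_2 = (n, n-1, …, 2, 1, 2, …, n-1, n)`. -/
def wordQ2 (n : ℕ) : List ℕ := descWord n 1 ++ ascWord 2 n

/-- `Q^{(i)} = (i, i-1, …, 1, 2, 3, …, n-1, 0, n, n-1, …, i+1)`. -/
def wordQi (n i : ℕ) : List ℕ :=
  descWord i 1 ++ ascWord 2 (n - 1) ++ [0] ++ descWord n (i + 1)

/-- `M_Q = g_{α_1}(z_1) · g_{α_2}(z_2) ⋯ g_{α_L}(z_L)` over `ℤ[z_1, z_2, …]`,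
where `z_j` is the variable `X j`. -/
noncomputable def MQ (n : ℕ) (Q : List ℕ) :
    Matrix (Fin (2 * n + 2)) (Fin (2 * n + 2)) (MvPolynomial ℕ ℤ) :=
  (List.ofFn (fun l : Fin Q.length => gMat n (Q.get l) (X ((l : ℕ) + 1)))).prod

/-- The determinant of the northwest `α × α` submatrix. -/
noncomputable def nwDet {n : ℕ}
    (M : Matrix (Fin (2 * n + 2)) (Fin (2 * n + 2)) (MvPolynomial ℕ ℤ))
    (α : ℕ) (h : α ≤ 2 * n + 2) : MvPolynomial ℕ ℤ :=
  (M.submatrix (Fin.castLE h) (Fin.castLE h)).det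

/-!
Track the standard basis vectors `e_b`, `b ≤ i`, through the word from the right. The tail
`(0, n, n-1, …, i+1)` fixes them; the ascending run `(2, …, n-1)` sends `e_b` (`b ≥ 2`) to
`e_{b+1} - z e_2`, and the descending run `(i, …, 1)` then lowers every index by one, so column `b`
of `M` is `e_b - z_{i+b-1} e_1`; column `1` is `e_{i+1} - ∑_{k ≤ i} z_{i+1-k} e_k`. Thus the
northwest `α × α` block is the identity bordered by its first row and column, and its determinant
is the Schur complement `m₁₁ - ∑_{k ≥ 2} m₁ₖ mₖ₁`.
-/

theorem Matrix.det_of_succ_succ_eq_one {R : Type*} [CommRing R] {m : ℕ}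
    (A : Matrix (Fin (m + 1)) (Fin (m + 1)) R)
    (hA : ∀ k l : Fin m, A k.succ l.succ = (1 : Matrix (Fin m) (Fin m) R) k l) :
    A.det = A 0 0 - ∑ k : Fin m, A 0 k.succ * A k.succ 0 := by
  let e : Fin (m + 1) ≃ Fin m ⊕ Unit := (finSuccEquiv m).trans (Equiv.optionEquivSumPUnit _)
  have h₁₁ : (reindex e e A).toBlocks₁₁ = 1 := by
    ext k l; simpa [e, toBlocks₁₁] using hA k l
  rw [← det_reindex_self e, ← fromBlocks_toBlocks (reindex e e A), h₁₁, det_fromBlocks_one₁₁,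
    det_unique]
  simp [e, toBlocks₁₂, toBlocks₂₁, toBlocks₂₂, mul_apply]

section GMatAction

variable {R : Type*} [CommRing R] (n : ℕ)

/-- The standard basis vector `e_c`, indexed from `1` like the rows of `gMat`. -/
def unitVec (c : ℕ) : Fin (2 * n + 2) → R := fun a => if (a : ℕ) + 1 = c then 1 else 0

variable {n}

lemma mulVec_unitVec (A : Matrix (Fin (2 * n + 2)) (Fin (2 * n + 2)) R) {c : ℕ} (hc₁ : 1 ≤ c)
    (hc₂ : c ≤ 2 * n + 2) : A *ᵥ unitVec n c = fun a => A a ⟨c - 1, by omega⟩ := by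
  have hsingle : unitVec n c = Pi.single (⟨c - 1, by omega⟩ : Fin (2 * n + 2)) (1 : R) := by
    ext a
    simp only [unitVec, Pi.single_apply, Fin.ext_iff]
    split_ifs <;> first | rfl | omega
  ext a
  rw [hsingle, mulVec_single_one]
  rfl

lemma apply_eq_mulVec_unitVec (A : Matrix (Fin (2 * n + 2)) (Fin (2 * n + 2)) R)
    (a b : Fin (2 * n + 2)) : A a b = (A *ᵥ unitVec n (b + 1)) a := by
  rw [mulVec_unitVec A (by omega) b.isLt]
  rfl

lemma gMat_mulVec_unitVec_self {β : ℕ} (hβ₁ : 1 ≤ β) (hβn : β ≤ n) (z : R) :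
    gMat n β z *ᵥ unitVec n β = -z • unitVec n β + unitVec n (β + 1) := by
  ext a
  rw [mulVec_unitVec _ hβ₁ (by omega)]
  simp only [gMat, of_apply, Pi.add_apply, Pi.smul_apply, smul_eq_mul, unitVec]
  split_ifs <;> first | ring1 | omega

lemma gMat_mulVec_unitVec_succ {β : ℕ} (hβ₁ : 1 ≤ β) (hβn : β ≤ n) (z : R) :
    gMat n β z *ᵥ unitVec n (β + 1) = unitVec n β := by
  ext a
  rw [mulVec_unitVec _ (by omega) (by omega)]
  simp only [gMat, of_apply, unitVec]
  split_ifs <;> first | ring1 | omega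

lemma gMat_mulVec_unitVec_of_ne {β c : ℕ} (hβ₁ : 1 ≤ β) (hβn : β ≤ n) (hc₁ : 1 ≤ c)
    (hcn : c ≤ n + 1) (hcβ : c ≠ β) (hcβ' : c ≠ β + 1) (z : R) :
    gMat n β z *ᵥ unitVec n c = unitVec n c := by
  ext a
  rw [mulVec_unitVec _ hc₁ (by omega)]
  simp only [gMat, of_apply, unitVec]
  split_ifs <;> first | ring1 | omega

lemma gMat_zero_mulVec_unitVec {c : ℕ} (hc₁ : 1 ≤ c) (hcn : c ≤ n - 1) (z : R) :
    gMat n 0 z *ᵥ unitVec n c = unitVec n c := by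
  ext a
  rw [mulVec_unitVec _ hc₁ (by omega)]
  simp only [gMat, of_apply, unitVec]
  split_ifs <;> first | ring1 | omega

end GMatAction

section WordMat

variable {R : Type*} [CommRing R] (n : ℕ)

def wordMat : List ℕ → (ℕ → R) → Matrix (Fin (2 * n + 2)) (Fin (2 * n + 2)) R
  | [], _ => 1
  | β :: Q, z => gMat n β (z 0) * wordMat Q fun l => z (l + 1)

variable {n}

lemma ofFn_gMat_prod_eq_wordMat (Q : List ℕ) (z : ℕ → R) :
    (List.ofFn fun l : Fin Q.length => gMat n (Q.get l) (z l)).prod = wordMat n Q z := by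
  induction Q generalizing z with
  | nil => rfl
  | cons β Q ih =>
    rw [List.ofFn_succ, List.prod_cons, wordMat, ← ih]
    rfl

lemma MQ_eq_wordMat (Q : List ℕ) : MQ n Q = wordMat n Q fun l => X (l + 1) :=
  ofFn_gMat_prod_eq_wordMat Q fun l => X (l + 1)

lemma wordMat_append (Q₁ Q₂ : List ℕ) (z : ℕ → R) :
    wordMat n (Q₁ ++ Q₂) z = wordMat n Q₁ z * wordMat n Q₂ fun l => z (l + Q₁.length) := by
  induction Q₁ generalizing z with
  | nil => simp [wordMat]
  | cons β Q ih =>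
    simp only [List.cons_append, wordMat, ih, Matrix.mul_assoc, List.length_cons, add_assoc]

lemma wordMat_mulVec_of_forall {Q : List ℕ} {v : Fin (2 * n + 2) → R}
    (hQ : ∀ β ∈ Q, ∀ x : R, gMat n β x *ᵥ v = v) (z : ℕ → R) : wordMat n Q z *ᵥ v = v := by
  induction Q generalizing z with
  | nil => exact one_mulVec v
  | cons β Q ih =>
    rw [wordMat, ← mulVec_mulVec, ih (fun β hβ => hQ β (List.mem_cons_of_mem _ hβ)),
      hQ β List.mem_cons_self]

end WordMat

lemma descWord_succ (a b : ℕ) (hba : b ≤ a + 1) :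
    descWord (a + 1) b = (a + 1) :: descWord a b := by
  rw [descWord, descWord, show a + 1 + 1 - b = a + 1 - b + 1 by omega, List.range_succ,
    List.reverse_append, List.reverse_singleton, List.singleton_append, List.map_cons]
  congr 1
  omega

lemma descWord_of_lt {a b : ℕ} (h : a < b) : descWord a b = [] := by
  simp [descWord, show a + 1 - b = 0 by omega]

lemma ascWord_of_le {a b : ℕ} (h : a ≤ b) : ascWord a b = a :: ascWord (a + 1) b := by
  rw [ascWord, ascWord, show b + 1 - a = b - a + 1 by omega, show b + 1 - (a + 1) = b - a by omega,
    List.range_succ_eq_map, List.map_cons, List.map_map, zero_add]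
  congr 1
  exact List.map_congr_left fun x _ => by simp only [Function.comp_apply]; omega

lemma mem_descWord {a b β : ℕ} (h : β ∈ descWord a b) : b ≤ β ∧ β ≤ a := by
  simp only [descWord, List.mem_map, List.mem_reverse, List.mem_range] at h
  omega

lemma mem_ascWord {a b β : ℕ} (h : β ∈ ascWord a b) : a ≤ β ∧ β ≤ b := by
  simp only [ascWord, List.mem_map, List.mem_range] at h
  omega

lemma length_descWord (a b : ℕ) : (descWord a b).length = a + 1 - b := by
  simp [descWord]

section Runs

variable {R : Type*} [CommRing R] {n : ℕ}

lemma wordMat_ascWord_mulVec_unitVec {a b c : ℕ} (ha : 1 ≤ a) (hac : a ≤ c) (hcb : c ≤ b)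
    (hbn : b ≤ n) (z : ℕ → R) :
    wordMat n (ascWord a b) z *ᵥ unitVec n c = -z (c - a) • unitVec n a + unitVec n (c + 1) := by
  obtain ⟨k, rfl⟩ := Nat.exists_eq_add_of_le hac
  clear hac
  induction k generalizing a z with
  | zero =>
    have hfix : ∀ β ∈ ascWord (a + 1) b, ∀ x : R, gMat n β x *ᵥ unitVec n a = unitVec n a :=
      fun β hβ x => have := mem_ascWord hβ
        gMat_mulVec_unitVec_of_ne (by omega) (by omega) ha (by omega) (by omega) (by omega) x
    rw [add_zero, ascWord_of_le (by omega), wordMat, ← mulVec_mulVec,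
      wordMat_mulVec_of_forall hfix, gMat_mulVec_unitVec_self ha (by omega), Nat.sub_self]
  | succ k ih =>
    rw [ascWord_of_le (by omega), wordMat, ← mulVec_mulVec, show a + (k + 1) = a + 1 + k by omega,
      ih (by omega) _ (by omega), mulVec_add, mulVec_smul,
      gMat_mulVec_unitVec_succ ha (by omega),
      gMat_mulVec_unitVec_of_ne ha (by omega) (by omega) (by omega) (by omega) (by omega)]
    congr 4
    omega

lemma wordMat_descWord_mulVec_unitVec {a b c : ℕ} (hb : 1 ≤ b) (hbc : b < c) (hca : c ≤ a + 1)
    (han : a ≤ n) (z : ℕ → R) : wordMat n (descWord a b) z *ᵥ unitVec n c = unitVec n (c - 1) := by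
  induction a generalizing z with
  | zero => omega
  | succ a ih =>
    rw [descWord_succ a b (by omega), wordMat, ← mulVec_mulVec]
    rcases Nat.lt_or_ge c (a + 2) with hc | hc
    · rw [ih (by omega) (by omega)]
      exact gMat_mulVec_unitVec_of_ne (by omega) han (by omega) (by omega) (by omega) (by omega) _
    · have hfix : ∀ β ∈ descWord a b, ∀ x : R, gMat n β x *ᵥ unitVec n c = unitVec n c :=
        fun β hβ x => have := mem_descWord hβ
          gMat_mulVec_unitVec_of_ne (by omega) (by omega) (by omega) (by omega) (by omega)
            (by omega) x
      rw [wordMat_mulVec_of_forall hfix, show c = a + 1 + 1 by omega,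
        gMat_mulVec_unitVec_succ (by omega) han]
      rfl

lemma wordMat_descWord_one_mulVec_unitVec_one {a : ℕ} (han : a ≤ n) (z : ℕ → R) :
    wordMat n (descWord a 1) z *ᵥ unitVec n 1 =
      unitVec n (a + 1) - ∑ k ∈ Finset.Icc 1 a, z (a - k) • unitVec n k := by
  induction a generalizing z with
  | zero => simp [descWord_of_lt, wordMat]
  | succ a ih =>
    have hfix : ∀ k ∈ Finset.Icc 1 a, gMat n (a + 1) (z 0) *ᵥ (z (a - k + 1) • unitVec n k) =
        z (a + 1 - k) • unitVec n k := by
      intro k hk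
      rw [Finset.mem_Icc] at hk
      rw [mulVec_smul, gMat_mulVec_unitVec_of_ne (by omega) han (by omega) (by omega) (by omega)
        (by omega), show a - k + 1 = a + 1 - k by omega]
    rw [descWord_succ a 1 (by omega), wordMat, ← mulVec_mulVec, ih (by omega), mulVec_sub,
      mulVec_sum, Finset.sum_congr rfl hfix, gMat_mulVec_unitVec_self (by omega) han,
      Finset.sum_Icc_succ_top (by omega), Nat.sub_self, neg_smul]
    abel

end Runs

section WordQi

variable {n i : ℕ}

lemma MQ_wordQi_mulVec_unitVec (hin : i ≤ n - 1) {b : ℕ} (hb : 1 ≤ b) (hbi : b ≤ i) :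
    MQ n (wordQi n i) *ᵥ unitVec n b = wordMat n (descWord i 1) (fun l => X (l + 1)) *ᵥ
      (wordMat n (ascWord 2 (n - 1)) (fun l => X (l + i + 1)) *ᵥ unitVec n b) := by
  have hfix₀ : ∀ β ∈ [0], ∀ x : MvPolynomial ℕ ℤ, gMat n β x *ᵥ unitVec n b = unitVec n b := by
    simp only [List.mem_singleton, forall_eq]
    exact gMat_zero_mulVec_unitVec hb (by omega)
  have hfix : ∀ β ∈ descWord n (i + 1), ∀ x : MvPolynomial ℕ ℤ,
      gMat n β x *ᵥ unitVec n b = unitVec n b := fun β hβ x =>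
    have := mem_descWord hβ
    gMat_mulVec_unitVec_of_ne (by omega) (by omega) hb (by omega) (by omega) (by omega) x
  rw [MQ_eq_wordMat, wordQi, wordMat_append, ← mulVec_mulVec, wordMat_mulVec_of_forall hfix,
    wordMat_append, ← mulVec_mulVec, wordMat_mulVec_of_forall hfix₀, wordMat_append,
    ← mulVec_mulVec]
  simp only [length_descWord, Nat.add_sub_cancel]

lemma MQ_wordQi_mulVec_unitVec_one (hi : 1 ≤ i) (hin : i ≤ n - 1) :
    MQ n (wordQi n i) *ᵥ unitVec n 1 =
      unitVec n (i + 1) -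
        ∑ k ∈ Finset.Icc 1 i, (X (i - k + 1) : MvPolynomial ℕ ℤ) • unitVec n k := by
  have hfix : ∀ β ∈ ascWord 2 (n - 1), ∀ x : MvPolynomial ℕ ℤ,
      gMat n β x *ᵥ unitVec n 1 = unitVec n 1 := fun β hβ x =>
    have := mem_ascWord hβ
    gMat_mulVec_unitVec_of_ne (by omega) (by omega) le_rfl (by omega) (by omega) (by omega) x
  rw [MQ_wordQi_mulVec_unitVec hin le_rfl hi, wordMat_mulVec_of_forall hfix,
    wordMat_descWord_one_mulVec_unitVec_one (by omega)]

lemma MQ_wordQi_mulVec_unitVec_of_two_le (hin : i ≤ n - 1) {b : ℕ} (hb : 2 ≤ b) (hbi : b ≤ i) :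
    MQ n (wordQi n i) *ᵥ unitVec n b =
      -(X (i + b - 1) : MvPolynomial ℕ ℤ) • unitVec n 1 + unitVec n b := by
  rw [MQ_wordQi_mulVec_unitVec hin (by omega) hbi,
    wordMat_ascWord_mulVec_unitVec one_le_two hb (by omega) (by omega), mulVec_add, mulVec_smul,
    wordMat_descWord_mulVec_unitVec (c := 2) le_rfl (by omega) (by omega) (by omega),
    wordMat_descWord_mulVec_unitVec le_rfl (by omega) (by omega) (by omega),
    show b - 2 + i + 1 = i + b - 1 by omega, Nat.add_sub_cancel]

lemma MQ_wordQi_apply_of_val_eq_zero (hi : 1 ≤ i) (hin : i ≤ n - 1) {a b : Fin (2 * n + 2)}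
    (ha : (a : ℕ) < i) (hb : (b : ℕ) = 0) : MQ n (wordQi n i) a b = -X (i - a) := by
  rw [apply_eq_mulVec_unitVec (MQ n (wordQi n i)), hb, MQ_wordQi_mulVec_unitVec_one hi hin]
  simp [unitVec, Finset.sum_apply, mul_ite, Finset.sum_ite_eq, ha.ne, ha,
    show i - (a + 1) + 1 = i - a by omega]

lemma MQ_wordQi_apply_of_pos (hin : i ≤ n - 1) {a b : Fin (2 * n + 2)} (hb : 0 < (b : ℕ))
    (hbi : (b : ℕ) < i) : MQ n (wordQi n i) a b =
      (if a = b then 1 else 0) - if (a : ℕ) = 0 then X (i + b) else 0 := by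
  rw [apply_eq_mulVec_unitVec (MQ n (wordQi n i)),
    MQ_wordQi_mulVec_unitVec_of_two_le hin (by omega) (by omega)]
  simp only [unitVec, Pi.add_apply, Pi.smul_apply, smul_eq_mul, Fin.ext_iff]
  rw [show i + (b + 1) - 1 = i + b by omega]
  split_ifs <;> first | ring1 | omega

end WordQi

/-- computational core of Proposition 4 for `1 ≤ α ≤ i`: for
`M = M_{Q^{(i)}}` with `1 ≤ i ≤ n-1` and `1 ≤ α ≤ i`, the determinant of the northwest
`α × α` submatrix of `M` equals `-(z_i + Σ_{k=1}^{α-1} z_{i-k} z_{i+k})`. -/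
theorem nwDet_MQ_wordQi_small (n : ℕ) (i : ℕ) (hi1 : 1 ≤ i)
    (hin : i ≤ n - 1) (α : ℕ) (hα1 : 1 ≤ α) (hαi : α ≤ i) :
    nwDet (MQ n (wordQi n i)) α (by omega) =
      -(X i + ∑ k ∈ Finset.Icc 1 (α - 1), X (i - k) * X (i + k)) := by
  obtain ⟨m, rfl⟩ : ∃ m, α = m + 1 := ⟨α - 1, by omega⟩
  have hle : m + 1 ≤ 2 * n + 2 := by omega
  rw [nwDet, det_of_succ_succ_eq_one]
  · have hterm : ∀ k : Fin m, MQ n (wordQi n i) (Fin.castLE hle 0) (Fin.castLE hle k.succ) *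
        MQ n (wordQi n i) (Fin.castLE hle k.succ) (Fin.castLE hle 0) =
          X (i - (k + 1)) * X (i + (k + 1)) := by
      intro k
      rw [MQ_wordQi_apply_of_pos hin (by simp) (by simp; omega),
        MQ_wordQi_apply_of_val_eq_zero hi1 hin (by simp; omega) (by simp)]
      simp [Fin.ext_iff, mul_comm]
    simp only [submatrix_apply, hterm]
    rw [MQ_wordQi_apply_of_val_eq_zero hi1 hin (by simp; omega) (by simp),
      Fin.sum_univ_eq_sum_range (fun k => X (i - (k + 1)) * X (i + (k + 1))), Finset.range_eq_Ico,
      Finset.sum_Ico_add' (fun k => X (i - k) * X (i + k)) 0 m 1]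
    simp only [Fin.val_castLE, Fin.val_zero, Nat.sub_zero, zero_add, Nat.add_sub_cancel,
      Finset.Ico_add_one_right_eq_Icc]
    ring
  · intro k l
    rw [submatrix_apply, MQ_wordQi_apply_of_pos hin (by simp) (by simp; omega), one_apply]
    simp [Fin.ext_iff]
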